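/- Assume p_{i+} > 0 for every row i, and let t be an integer with 1 ≤ t < c such that S_k(p_{+·}) ≠ 1 for every k with 1 ≤ k ≤ t. Then λ^{K(k)}_{Y|X} = 0 for all k = 1, …, t if and only if the quasi-independence condition S_k(p_{i·}) = p_{i+} · S_k(p_{+·}) holds for every row i and every k with 1 ≤ k ≤ t (equivalently, the k-th largest entry of each row i equals p_{i+} times the k-th largest column marginal for all k ≤ t). -/

import Mathlib

/-- `Smax t q` : the maximum, over subsets `T` of the index type with `T.card = t`,
of `∑ j ∈ T, q j` (i.e. the sum of the `t` largest entries of `q`). -/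
noncomputable def Smax {n : ℕ} (t : ℕ) (q : Fin n → ℝ) : ℝ :=
  sSup ((fun T : Finset (Fin n) => ∑ j ∈ T, q j) '' {T : Finset (Fin n) | T.card = t})

/-- Row marginals `p_{i+}`. -/
noncomputable def rowMarg {r c : ℕ} (p : Fin r → Fin c → ℝ) : Fin r → ℝ :=
  fun i => ∑ j, p i j

/-- Column marginals `p_{+j}`. -/
noncomputable def colMarg {r c : ℕ} (p : Fin r → Fin c → ℝ) : Fin c → ℝ :=
  fun j => ∑ i, p i j

/-- The measure `λ^{(t)}_{Y|X}` based on multi-categorical proportional reduction in error. -/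
noncomputable def lambdaT {r c : ℕ} (t : ℕ) (p : Fin r → Fin c → ℝ) : ℝ :=
  (∑ i, Smax t (p i) - Smax t (colMarg p)) / (1 - Smax t (colMarg p))

/-- The alternative measure `λ^{K(t)}_{Y|X}`. -/
noncomputable def lambdaKT {r c : ℕ} (t : ℕ) (p : Fin r → Fin c → ℝ) : ℝ :=
  (Real.sqrt (∑ i, (Smax t (p i)) ^ 2 / rowMarg p i) - Smax t (colMarg p)) /
    (1 - Smax t (colMarg p))

/-!
Write `w i = p_{i+}`, `s i = S_k(p_{i·})` and `C = S_k(p_{+·})`. Since `∑ w i = 1`,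
`∑ w i (s i / w i - C)² = ∑ s i² / w i - 2 C ∑ s i + C²`, and `C ≤ ∑ s i` because taking the
sum of the `k` largest entries is subadditive. So if `√(∑ s i² / w i) = C`, the weighted sum of
squares equals `2 C (C - ∑ s i) ≤ 0`, which forces `s i = w i C` for every row; the converse is a
direct computation.
-/

open Finset

section Smax

variable {n k : ℕ}

lemma bddAbove_image_sum_card_eq (q : Fin n → ℝ) :
    BddAbove ((fun T : Finset (Fin n) => ∑ j ∈ T, q j) '' {T | T.card = k}) :=
  ((Set.toFinite _).image _).bddAbove

lemma sum_le_Smax (q : Fin n → ℝ) {T : Finset (Fin n)} (hT : T.card = k) :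
    ∑ j ∈ T, q j ≤ Smax k q :=
  le_csSup (bddAbove_image_sum_card_eq q) ⟨T, hT, rfl⟩

lemma Smax_nonneg {q : Fin n → ℝ} (hq : ∀ j, 0 ≤ q j) : 0 ≤ Smax k q :=
  Real.sSup_nonneg <| by
    rintro _ ⟨T, -, rfl⟩
    exact sum_nonneg fun j _ => hq j

-- Junk value: there are no `k`-subsets of `Fin n`, and `sSup ∅ = 0` in `ℝ`.
lemma Smax_of_lt (hnk : n < k) (q : Fin n → ℝ) : Smax k q = 0 := by
  have hempty : {T : Finset (Fin n) | T.card = k} = ∅ :=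
    Set.eq_empty_of_forall_notMem fun T (hT : T.card = k) => by
      have := T.card_le_univ
      rw [Fintype.card_fin] at this
      omega
  rw [Smax, hempty, Set.image_empty, Real.sSup_empty]

lemma Smax_sum_le {ι : Type*} (s : Finset ι) (q : ι → Fin n → ℝ) :
    Smax k (∑ i ∈ s, q i) ≤ ∑ i ∈ s, Smax k (q i) := by
  rcases lt_or_ge n k with hnk | hkn
  · simp only [Smax_of_lt hnk, sum_const_zero, le_refl]
  obtain ⟨T₀, -, hT₀⟩ := exists_subset_card_eq (s := (univ : Finset (Fin n))) (by simpa using hkn)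
  refine csSup_le ⟨_, T₀, hT₀, rfl⟩ ?_
  rintro _ ⟨T, hT, rfl⟩
  simp only [Finset.sum_apply]
  rw [sum_comm]
  exact sum_le_sum fun i _ => sum_le_Smax (q i) hT

end Smax

section WeightedSquares

variable {ι : Type*} [Fintype ι] {w s : ι → ℝ} {C : ℝ}

lemma sum_mul_div_sub_sq (hw : ∀ i, w i ≠ 0) (hw1 : ∑ i, w i = 1) :
    ∑ i, w i * (s i / w i - C) ^ 2 = ∑ i, s i ^ 2 / w i - 2 * C * ∑ i, s i + C ^ 2 := by
  have hterm : ∀ i, w i * (s i / w i - C) ^ 2 = s i ^ 2 / w i - 2 * C * s i + C ^ 2 * w i := by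
    intro i
    field_simp [hw i]
    ring
  simp only [hterm, sum_add_distrib, sum_sub_distrib, ← mul_sum, hw1, mul_one]

lemma sqrt_sum_sq_div_eq_iff (hw : ∀ i, 0 < w i) (hw1 : ∑ i, w i = 1) (hC : 0 ≤ C)
    (hCs : C ≤ ∑ i, s i) :
    √(∑ i, s i ^ 2 / w i) = C ↔ ∀ i, s i = w i * C := by
  constructor
  · intro hsqrt i
    have hQ : ∑ i, s i ^ 2 / w i = C ^ 2 := by
      rw [← hsqrt, Real.sq_sqrt (sum_nonneg fun i _ => div_nonneg (sq_nonneg _) (hw i).le)]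
    have hnonneg : ∀ i ∈ univ, 0 ≤ w i * (s i / w i - C) ^ 2 :=
      fun i _ => mul_nonneg (hw i).le (sq_nonneg _)
    have hzero : ∑ i, w i * (s i / w i - C) ^ 2 = 0 := by
      refine le_antisymm ?_ (sum_nonneg hnonneg)
      rw [sum_mul_div_sub_sq (fun i => (hw i).ne') hw1, hQ]
      nlinarith
    have hi := (sum_eq_zero_iff_of_nonneg hnonneg).mp hzero i (mem_univ i)
    rw [mul_eq_zero, or_iff_right (hw i).ne', sq_eq_zero_iff, sub_eq_zero,
      div_eq_iff (hw i).ne'] at hi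
    rw [hi, mul_comm]
  · intro hs
    have hQ : ∑ i, s i ^ 2 / w i = C ^ 2 := by
      have hterm : ∀ i, s i ^ 2 / w i = C ^ 2 * w i := by
        intro i
        rw [hs i]
        field_simp [(hw i).ne']
      simp only [hterm, ← mul_sum, hw1, mul_one]
    rw [hQ, Real.sqrt_sq hC]

end WeightedSquares

section ContingencyTable

variable {r c : ℕ} {p : Fin r → Fin c → ℝ}

lemma Smax_colMarg_le_sum (k : ℕ) :
    Smax k (colMarg p) ≤ ∑ i, Smax k (p i) := by
  have hcol : colMarg p = ∑ i, p i := funext fun j => (Finset.sum_apply j univ p).symm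
  rw [hcol]
  exact Smax_sum_le univ p

lemma lambdaKT_eq_zero_iff {k : ℕ} (hp : ∀ i j, 0 ≤ p i j) (hsum : ∑ i, ∑ j, p i j = 1)
    (hpos : ∀ i, 0 < rowMarg p i) (hS : Smax k (colMarg p) ≠ 1) :
    lambdaKT k p = 0 ↔ ∀ i, Smax k (p i) = rowMarg p i * Smax k (colMarg p) := by
  have hC : 0 ≤ Smax k (colMarg p) := Smax_nonneg fun j => sum_nonneg fun i _ => hp i j
  rw [lambdaKT, div_eq_zero_iff, or_iff_left (sub_ne_zero.mpr hS.symm), sub_eq_zero]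
  exact sqrt_sum_sq_div_eq_iff hpos hsum hC (Smax_colMarg_le_sum k)

end ContingencyTable

theorem lambdaKT_zero_iff_quasiIndep_general
    (r c : ℕ)
    (p : Fin r → Fin c → ℝ) (hp : ∀ i j, 0 ≤ p i j)
    (hsum : ∑ i, ∑ j, p i j = 1)
    (hpos : ∀ i, 0 < rowMarg p i)
    (t : ℕ)
    (hS : ∀ k, 1 ≤ k → k ≤ t → Smax k (colMarg p) ≠ 1) :
    (∀ k, 1 ≤ k → k ≤ t → lambdaKT k p = 0) ↔
      (∀ i, ∀ k, 1 ≤ k → k ≤ t →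
        Smax k (p i) = rowMarg p i * Smax k (colMarg p)) := by
  have hlevel k (hk1 : 1 ≤ k) (hkt : k ≤ t) := lambdaKT_eq_zero_iff hp hsum hpos (hS k hk1 hkt)
  constructor
  · exact fun h i k hk1 hkt => (hlevel k hk1 hkt).mp (h k hk1 hkt) i
  · exact fun h k hk1 hkt => (hlevel k hk1 hkt).mpr fun i => h i k hk1 hkt

/-- `λ^{K(k)}_{Y|X} = 0` for all `1 ≤ k ≤ t` iff quasi-independence
holds at all levels `1 ≤ k ≤ t`. -/
theorem lambdaKT_zero_iff_quasiIndep
    (r c : ℕ) (hr : 2 ≤ r) (hc : 2 ≤ c)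
    (p : Fin r → Fin c → ℝ) (hp : ∀ i j, 0 ≤ p i j)
    (hsum : ∑ i, ∑ j, p i j = 1)
    (hpos : ∀ i, 0 < rowMarg p i)
    (t : ℕ) (ht1 : 1 ≤ t) (htc : t < c)
    (hS : ∀ k, 1 ≤ k → k ≤ t → Smax k (colMarg p) ≠ 1) :
    (∀ k, 1 ≤ k → k ≤ t → lambdaKT k p = 0) ↔
      (∀ i, ∀ k, 1 ≤ k → k ≤ t →
        Smax k (p i) = rowMarg p i * Smax k (colMarg p)) :=
  lambdaKT_zero_iff_quasiIndep_general r c p hp hsum hpos t hS
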